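/- Let g ≥ 2. Consider the graph whose vertices are the vectors v ∈ H = ℤ^{2(g+1)} whose a_1-coordinate equals 1 (any such vector is automatically primitive), with an edge between distinct vertices v and w whenever ω(v,w) = 0 and gcd(v,w) = 1 (i.e. v and w span a rank-2 isotropic direct summand of H). Then this graph is connected: any two such vectors are joined by a finite path of such edges. (This is the 0-connectivity part of the theorem that the complex Λ̂(g) of ordered isotropic bases all of whose vectors have a_1-coordinate 1 is (g−2)-connected.) -/

import Mathlib

namespace Paper

/-- The standard symplectic form on `R^{2g}` with respect to the basis
`a_1, b_1, …, a_g, b_g` (coordinates `2i, 2i+1` for `a_{i+1}, b_{i+1}`). -/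
def symp {R : Type*} [CommRing R] {g : ℕ} (x y : Fin (2 * g) → R) : R :=
  ∑ i : Fin g,
    (x ⟨2 * i.1, by omega⟩ * y ⟨2 * i.1 + 1, by omega⟩ -
      x ⟨2 * i.1 + 1, by omega⟩ * y ⟨2 * i.1, by omega⟩)

theorem symp_add_left {R : Type*} [CommRing R] {g : ℕ} (x y a : Fin (2 * g) → R) :
    symp (x + y) a = symp x a + symp y a := by
  unfold symp
  rw [← Finset.sum_add_distrib]
  exact Finset.sum_congr rfl fun i _ => by simp only [Pi.add_apply]; ring

theorem symp_smul_left {R : Type*} [CommRing R] {g : ℕ} (c : R) (x a : Fin (2 * g) → R) :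
    symp (c • x) a = c * symp x a := by
  unfold symp
  rw [Finset.mul_sum]
  exact Finset.sum_congr rfl fun i _ => by simp only [Pi.smul_apply, smul_eq_mul]; ring

theorem symp_zero_left {R : Type*} [CommRing R] {g : ℕ} (a : Fin (2 * g) → R) :
    symp (0 : Fin (2 * g) → R) a = 0 := by
  unfold symp; simp

/-- The orthogonal complement `A^⊥ = {x | ω(x,a) = 0 for all a ∈ A}`. -/
def perp {R : Type*} [CommRing R] {g : ℕ} (A : Set (Fin (2 * g) → R)) :
    Submodule R (Fin (2 * g) → R) where
  carrier := {x | ∀ a ∈ A, symp x a = 0}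
  add_mem' := by
    intro x y hx hy a ha
    rw [symp_add_left, hx a ha, hy a ha, add_zero]
  zero_mem' := by
    intro a ha
    exact symp_zero_left a
  smul_mem' := by
    intro c x hx a ha
    rw [symp_smul_left, hx a ha, mul_zero]

/-- The submodule of vectors whose first `m` coordinates vanish.
`H_k = coordZero R (2*g) (2*(k-1))`, and `H₂ = coordZero R (2*(g+1)) 2`. -/
def coordZero (R : Type*) [CommRing R] (n m : ℕ) : Submodule R (Fin n → R) where
  carrier := {v | ∀ j : Fin n, (j : ℕ) < m → v j = 0}
  add_mem' := by
    intro x y hx hy j hj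
    have h1 := hx j hj
    have h2 := hy j hj
    simp [Pi.add_apply, h1, h2]
  zero_mem' := by intro j hj; rfl
  smul_mem' := by
    intro c x hx j hj
    have h1 := hx j hj
    simp [Pi.smul_apply, h1]

/-- The standard basis vector `a_{i+1}` (`i` is 0-indexed). -/
def stdA (R : Type*) [CommRing R] (g i : ℕ) : Fin (2 * g) → R :=
  fun j => if (j : ℕ) = 2 * i then 1 else 0

/-- The standard basis vector `b_{i+1}` (`i` is 0-indexed). -/
def stdB (R : Type*) [CommRing R] (g i : ℕ) : Fin (2 * g) → R :=
  fun j => if (j : ℕ) = 2 * i + 1 then 1 else 0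

/-- Regard an integer vector as a rational vector. -/
def qcast {n : ℕ} (v : Fin n → ℤ) : Fin n → ℚ := fun j => (v j : ℚ)

/-- The projection `pr₂` deleting the `a_1`- and `b_1`-coordinates. -/
def pr2 {R : Type*} [CommRing R] {n : ℕ} (v : Fin n → R) : Fin n → R :=
  fun j => if (j : ℕ) < 2 then 0 else v j

/-- `gcd(v_1, …, v_m) = 1`: the vectors are linearly independent and their
ℤ-span is a direct summand. -/
def IsUnimodular {n m : ℕ} (v : Fin m → Fin n → ℤ) : Prop :=
  LinearIndependent ℤ v ∧
    ∃ C : Submodule ℤ (Fin n → ℤ), IsCompl (Submodule.span ℤ (Set.range v)) C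

/-- A primitive vector. -/
def Primitive {n : ℕ} (v : Fin n → ℤ) : Prop := IsUnimodular ![v]

/-- The entries of `w` are pairwise `ω`-orthogonal. -/
def PairwiseOrth {g m : ℕ} (w : Fin m → Fin (2 * g) → ℤ) : Prop :=
  ∀ i j, i ≠ j → symp (w i) (w j) = 0

/-- `Λ³ W`: the span of all wedges of three vectors from `W` inside the
exterior algebra. -/
def wedge3 {g : ℕ} (W : Submodule ℚ (Fin (2 * g) → ℚ)) :
    Submodule ℚ (ExteriorAlgebra ℚ (Fin (2 * g) → ℚ)) :=
  Submodule.span ℚ {x | ∃ z₁ ∈ W, ∃ z₂ ∈ W, ∃ z₃ ∈ W,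
    x = ExteriorAlgebra.ι ℚ z₁ * ExteriorAlgebra.ι ℚ z₂ * ExteriorAlgebra.ι ℚ z₃}

/-- `u ∧ Λ² W`. -/
def uWedge2 {g : ℕ} (u : Fin (2 * g) → ℚ) (W : Submodule ℚ (Fin (2 * g) → ℚ)) :
    Submodule ℚ (ExteriorAlgebra ℚ (Fin (2 * g) → ℚ)) :=
  Submodule.span ℚ {x | ∃ z₁ ∈ W, ∃ z₂ ∈ W,
    x = ExteriorAlgebra.ι ℚ u * ExteriorAlgebra.ι ℚ z₁ * ExteriorAlgebra.ι ℚ z₂}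

/-- `u ∧ u' ∧ W`. -/
def uuWedge1 {g : ℕ} (u u' : Fin (2 * g) → ℚ) (W : Submodule ℚ (Fin (2 * g) → ℚ)) :
    Submodule ℚ (ExteriorAlgebra ℚ (Fin (2 * g) → ℚ)) :=
  Submodule.span ℚ {x | ∃ z ∈ W,
    x = ExteriorAlgebra.ι ℚ u * ExteriorAlgebra.ι ℚ u' * ExteriorAlgebra.ι ℚ z}

/-- The simplicial differential: on the summand indexed by `w` it sends `z` to
`Σ_j (-1)^j · z` placed in the summand indexed by `∂_j w`. -/
noncomputable def diff (g p : ℕ)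
    (ξ : (Fin (p + 1) → Fin (2 * g) → ℤ) →₀ ExteriorAlgebra ℚ (Fin (2 * g) → ℚ)) :
    (Fin p → Fin (2 * g) → ℤ) →₀ ExteriorAlgebra ℚ (Fin (2 * g) → ℚ) :=
  ξ.sum fun w z =>
    ∑ j : Fin (p + 1), ((-1 : ℚ) ^ (j : ℕ)) • Finsupp.single (fun i => w (j.succAbove i)) z

/-- The gcd of the determinants of all maximal square submatrices of the matrix
whose columns are the `v i`. -/
def vgcd {ι : Type*} [Fintype ι] {m : ℕ} (v : Fin m → ι → ℤ) : ℕ :=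
  Finset.univ.gcd fun r : Fin m → ι => (Matrix.det (Matrix.of fun i j => v j (r i))).natAbs

/-!
Two vertices `x, y` that differ by `±1` in some coordinate `k` span a direct summand: the matrix
of the functionals `u ↦ u_{a₁}` and `u ↦ u_k` on the pair has determinant `±1`, so integer
combinations of them are dual to `x, y`, and their common kernel is a complement of the span.
Hence an isotropic pair of vertices differing by `±1` in one coordinate is an edge. Every vertex
`v` is joined to `a₁` by the path `v — a₁ + c b₁ + t b₂ — a₁ + c b₁ + a₃ — a₁ + a₂ + c b₃ — a₁`,
where `t = v_{b₂} + 1` and `c = v_{b₁} - v_{a₂} t` make the first step isotropic.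
-/

theorem isUnimodular_of_biorthogonal {n m : ℕ} (v : Fin m → Fin n → ℤ)
    (φ : Fin m → (Fin n → ℤ) →ₗ[ℤ] ℤ) (h : ∀ a b, φ a (v b) = if a = b then 1 else 0) :
    IsUnimodular v := by
  set L := Fintype.linearCombination ℤ v
  set Φ := LinearMap.pi φ
  have hΦL : Φ ∘ₗ L = LinearMap.id := by
    ext c a
    simp [L, Φ, Fintype.linearCombination_apply, h, Pi.single_apply]
  have hL : LinearMap.ker L = ⊥ := LinearMap.ker_eq_bot_of_inverse hΦL
  have hΦ : Function.Surjective Φ := Function.LeftInverse.surjective (LinearMap.congr_fun hΦL)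
  have hLΦ : IsIdempotentElem (L ∘ₗ Φ) := by
    change L ∘ₗ Φ ∘ₗ (L ∘ₗ Φ) = L ∘ₗ Φ
    rw [← LinearMap.comp_assoc Φ, hΦL, LinearMap.id_comp]
  refine ⟨linearIndependent_iff_injective_fintypeLinearCombination.2
    (LinearMap.ker_eq_bot.1 hL), LinearMap.ker Φ, ?_⟩
  rw [← Fintype.range_linearCombination]
  simpa only [LinearMap.range_comp_of_range_eq_top _ (LinearMap.range_eq_top_of_surjective _ hΦ),
    LinearMap.ker_comp_of_ker_eq_bot _ hL] using LinearMap.IsIdempotentElem.isCompl hLΦ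

theorem isUnimodular_pair_of_isUnit_sub {n : ℕ} {x y : Fin n → ℤ} {i k : Fin n}
    (hx : x i = 1) (hy : y i = 1) (hk : IsUnit (y k - x k)) :
    IsUnimodular ![x, y] := by
  obtain ⟨ψ, hψx, hψy⟩ : ∃ ψ : (Fin n → ℤ) →ₗ[ℤ] ℤ, ψ x = 0 ∧ ψ y = 1 := by
    obtain ⟨ε, hε⟩ := hk
    refine ⟨(ε⁻¹ : ℤˣ) • (LinearMap.proj k - x k • LinearMap.proj i), ?_, ?_⟩ <;>
      simp [hx, hy, ← hε, Units.smul_def]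
  refine isUnimodular_of_biorthogonal _ ![LinearMap.proj i - ψ, ψ] fun a b => ?_
  fin_cases a <;> fin_cases b <;> simp [hx, hy, hψx, hψy]

theorem IsUnimodular.swap {n : ℕ} {x y : Fin n → ℤ} (h : IsUnimodular ![x, y]) :
    IsUnimodular ![y, x] := by
  refine ⟨LinearIndependent.pair_symm_iff.1 h.1, ?_⟩
  simpa only [Matrix.range_cons_cons_empty, Set.pair_comm] using h.2

section Symp

variable {R : Type*} [CommRing R] {g : ℕ}

theorem symp_swap (x y : Fin (2 * g) → R) : symp y x = -symp x y := by
  unfold symp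
  rw [← Finset.sum_neg_distrib]
  exact Finset.sum_congr rfl fun i _ => by ring

theorem symp_add_right (a x y : Fin (2 * g) → R) : symp a (x + y) = symp a x + symp a y := by
  rw [symp_swap, symp_add_left, symp_swap x, symp_swap y, neg_add]

theorem symp_smul_right (c : R) (a x : Fin (2 * g) → R) : symp a (c • x) = c * symp a x := by
  rw [symp_swap, symp_smul_left, symp_swap x, mul_neg]

theorem symp_stdB_right {i : ℕ} (hi : i < g) (x : Fin (2 * g) → R) :
    symp x (stdB R g i) = x ⟨2 * i, by omega⟩ := by
  unfold symp
  rw [Finset.sum_eq_single ⟨i, hi⟩ (fun j _ hj => ?_) (by simp)]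
  · simp [stdB]
  · simp only [stdB, ne_eq, Fin.ext_iff] at hj ⊢
    split_ifs <;> first | omega | ring

theorem symp_stdA_right {i : ℕ} (hi : i < g) (x : Fin (2 * g) → R) :
    symp x (stdA R g i) = -x ⟨2 * i + 1, by omega⟩ := by
  unfold symp
  rw [Finset.sum_eq_single ⟨i, hi⟩ (fun j _ hj => ?_) (by simp)]
  · simp [stdA]
  · simp only [stdA, ne_eq, Fin.ext_iff] at hj ⊢
    split_ifs <;> first | omega | ring

end Symp

theorem _root_.SimpleGraph.Reachable.exists_chain {V : Type*} {G : SimpleGraph V} {u v : V}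
    (h : G.Reachable u v) :
    ∃ (N : ℕ) (c : Fin (N + 1) → V), c 0 = u ∧ c (Fin.last N) = v ∧
      ∀ i : Fin N, G.Adj (c i.castSucc) (c i.succ) := by
  obtain ⟨p⟩ := h
  exact ⟨p.length, fun i => p.getVert i, p.getVert_zero, p.getVert_length,
    fun i => p.adj_getVert_succ i.isLt⟩

abbrev Vertex (g : ℕ) := {v : Fin (2 * (g + 1)) → ℤ // v ⟨0, by omega⟩ = 1}

def isotropicPairGraph (g : ℕ) : SimpleGraph (Vertex g) where
  Adj v w := v.1 ≠ w.1 ∧ symp v.1 w.1 = 0 ∧ IsUnimodular ![v.1, w.1]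
  symm := ⟨fun _ _ h => ⟨h.1.symm, by rw [symp_swap, h.2.1, neg_zero], h.2.2.swap⟩⟩
  loopless := ⟨fun _ h => h.1 rfl⟩

namespace isotropicPairGraph

variable {g : ℕ}

theorem adj_of_isUnit_sub {v w : Vertex g} (k : Fin (2 * (g + 1)))
    (hk : IsUnit (w.1 k - v.1 k)) (hvw : symp v.1 w.1 = 0) : (isotropicPairGraph g).Adj v w :=
  ⟨fun h => by simp [h] at hk, hvw, isUnimodular_pair_of_isUnit_sub v.2 w.2 hk⟩

def base (g : ℕ) : Vertex g := ⟨stdA ℤ (g + 1) 0, by simp [stdA]⟩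

theorem reachable_base (hg : 2 ≤ g) (v : Vertex g) :
    (isotropicPairGraph g).Reachable v (base g) := by
  set t := v.1 ⟨3, by omega⟩ + 1
  set c := v.1 ⟨1, by omega⟩ - v.1 ⟨2, by omega⟩ * t
  let y₁ : Vertex g := ⟨stdA ℤ _ 0 + c • stdB ℤ _ 0 + t • stdB ℤ _ 1, by simp [stdA, stdB]⟩
  let y₂ : Vertex g := ⟨stdA ℤ _ 0 + c • stdB ℤ _ 0 + stdA ℤ _ 2, by simp [stdA, stdB]⟩
  let y₃ : Vertex g := ⟨stdA ℤ _ 0 + stdA ℤ _ 1 + c • stdB ℤ _ 2, by simp [stdA, stdB]⟩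
  have e₁ : (isotropicPairGraph g).Adj v y₁ := by
    refine adj_of_isUnit_sub ⟨3, by omega⟩ (by simp [y₁, t, stdA, stdB]) ?_
    simp (disch := omega) only [y₁, symp_add_right, symp_smul_right, symp_stdA_right,
      symp_stdB_right, Nat.mul_zero, Nat.zero_add, Nat.mul_one, v.2, c]
    ring
  have e₂ : (isotropicPairGraph g).Adj y₁ y₂ := by
    refine adj_of_isUnit_sub ⟨4, by omega⟩ (by simp [y₁, y₂, stdA, stdB]) ?_
    simp (disch := omega) only [y₁, y₂, symp_add_right, symp_smul_right, symp_stdA_right,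
      symp_stdB_right, stdA, stdB, Pi.add_apply, Pi.smul_apply, smul_eq_mul]
    norm_num
  have e₃ : (isotropicPairGraph g).Adj y₂ y₃ := by
    refine adj_of_isUnit_sub ⟨2, by omega⟩ (by simp [y₂, y₃, stdA, stdB]) ?_
    simp (disch := omega) only [y₂, y₃, symp_add_right, symp_smul_right, symp_stdA_right,
      symp_stdB_right, stdA, stdB, Pi.add_apply, Pi.smul_apply, smul_eq_mul]
    norm_num
  have e₄ : (isotropicPairGraph g).Adj y₃ (base g) := by
    refine adj_of_isUnit_sub ⟨2, by omega⟩ (by simp [y₃, base, stdA, stdB]) ?_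
    simp (disch := omega) only [y₃, base, symp_stdA_right, stdA, stdB, Pi.add_apply,
      Pi.smul_apply, smul_eq_mul]
    norm_num
  exact e₁.reachable.trans (e₂.reachable.trans (e₃.reachable.trans e₄.reachable))

theorem connected (hg : 2 ≤ g) : (isotropicPairGraph g).Connected :=
  have : Nonempty (Vertex g) := ⟨base g⟩
  ⟨fun v w => (reachable_base hg v).trans (reachable_base hg w).symm⟩

end isotropicPairGraph

/-- the graph on vectors of `ℤ^{2(g+1)}` with `a_1`-coordinate `1`,
with edges the rank-2 isotropic unimodular pairs, is connected. -/
theorem stmt3 (g : ℕ) (hg : 2 ≤ g) (v w : Fin (2 * (g + 1)) → ℤ)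
    (hv : v ⟨0, by omega⟩ = 1) (hw : w ⟨0, by omega⟩ = 1) :
    ∃ (N : ℕ) (c : Fin (N + 1) → Fin (2 * (g + 1)) → ℤ),
      c 0 = v ∧ c (Fin.last N) = w ∧ (∀ i, c i ⟨0, by omega⟩ = 1) ∧
      ∀ i : Fin N, c i.castSucc ≠ c i.succ ∧ symp (c i.castSucc) (c i.succ) = 0 ∧
        IsUnimodular ![c i.castSucc, c i.succ] := by
  obtain ⟨N, c, hc₀, hcN, hadj⟩ :=
    ((isotropicPairGraph.connected hg).preconnected ⟨v, hv⟩ ⟨w, hw⟩).exists_chain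
  exact ⟨N, fun i => (c i).1, congrArg Subtype.val hc₀, congrArg Subtype.val hcN,
    fun i => (c i).2, hadj⟩

end Paper
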